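/- arXiv:0804.2868 — 2 statements merged into one kernel-verified Lean document; each statement's English description precedes it below -/
import Mathlib

section
/- For 0 < λ ≤ 1 and x ∈ (-π/2, π/2), with ζ(x,λ) = arcsin(√(1 - λ² cos² x)) and φ(x) = π/2 - x - ζ(x,λ), one has cos φ / cos x = λ sin x + sin ζ, and dφ/dx = -(λ sin x + sin ζ)/sin ζ (wherever sin ζ ≠ 0). -/
open Real

noncomputable def zeta (x lam : ℝ) : ℝ :=
  Real.arcsin (Real.sqrt (1 - lam^2 * Real.cos x ^ 2))

noncomputable def phiOfx (lam x : ℝ) : ℝ := π/2 - x - zeta x lam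

/-! The whole computation rests on `ζ(x, λ) = arccos (λ cos x)` for `x ∈ (-π/2, π/2)`: then
`cos ζ = λ cos x`, so `cos φ = sin (x + ζ) = cos x (λ sin x + sin ζ)`, and `ζ` is differentiable
wherever `λ cos x ≠ 1`, i.e. wherever `sin ζ = √(1 - λ² cos² x) ≠ 0`. -/

lemma arcsin_sqrt_one_sub_sq (a : ℝ) : arcsin √(1 - a ^ 2) = arccos |a| := by
  rw [arccos_eq_arcsin (abs_nonneg a), sq_abs]

lemma zeta_eq_arccos_abs (x lam : ℝ) : zeta x lam = arccos |lam * cos x| := by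
  rw [zeta, ← arcsin_sqrt_one_sub_sq, mul_pow]

lemma zeta_eq_arccos {x lam : ℝ} (hlam : 0 ≤ lam) (hx : x ∈ Set.Ioo (-(π / 2)) (π / 2)) :
    zeta x lam = arccos (lam * cos x) := by
  rw [zeta_eq_arccos_abs, abs_of_nonneg (mul_nonneg hlam (cos_pos_of_mem_Ioo hx).le)]

lemma sin_zeta (x lam : ℝ) : sin (zeta x lam) = √(1 - (lam * cos x) ^ 2) := by
  rw [zeta_eq_arccos_abs, sin_arccos, sq_abs]

lemma cos_zeta {x lam : ℝ} (hlam : 0 ≤ lam) (hlam1 : lam ≤ 1)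
    (hx : x ∈ Set.Ioo (-(π / 2)) (π / 2)) : cos (zeta x lam) = lam * cos x := by
  have hcos := cos_pos_of_mem_Ioo hx
  rw [zeta_eq_arccos hlam hx]
  exact cos_arccos (by nlinarith) (by nlinarith [cos_le_one x])

lemma cos_phiOfx {x lam : ℝ} (hlam : 0 ≤ lam) (hlam1 : lam ≤ 1)
    (hx : x ∈ Set.Ioo (-(π / 2)) (π / 2)) :
    cos (phiOfx lam x) = cos x * (lam * sin x + sin (zeta x lam)) := by
  rw [phiOfx, sub_sub, cos_pi_div_two_sub, sin_add, cos_zeta hlam hlam1 hx]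
  ring

lemma hasDerivAt_zeta {x lam : ℝ} (hlam : 0 ≤ lam) (hx : x ∈ Set.Ioo (-(π / 2)) (π / 2))
    (hsin : sin (zeta x lam) ≠ 0) :
    HasDerivAt (fun t ↦ zeta t lam) (lam * sin x / sin (zeta x lam)) x := by
  have hnonneg : 0 ≤ lam * cos x := mul_nonneg hlam (cos_pos_of_mem_Ioo hx).le
  have hne_one : lam * cos x ≠ 1 := by
    intro h
    simp [sin_zeta, h] at hsin
  have hcomp := (hasDerivAt_arccos (by linarith) hne_one).comp x
    ((hasDerivAt_cos x).const_mul lam)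
  have hlocal : (fun t ↦ arccos (lam * cos t)) =ᶠ[nhds x] fun t ↦ zeta t lam := by
    filter_upwards [Ioo_mem_nhds hx.1 hx.2] with t ht
    exact (zeta_eq_arccos hlam ht).symm
  refine (hcomp.congr_of_eventuallyEq hlocal.symm).congr_deriv ?_
  rw [sin_zeta]
  ring

theorem stmt_3 (lam x : ℝ) (hlam : 0 < lam) (hlam1 : lam ≤ 1)
    (hx : x ∈ Set.Ioo (-(π/2)) (π/2)) :
    Real.cos (phiOfx lam x) / Real.cos x = lam * Real.sin x + Real.sin (zeta x lam) ∧
    (Real.sin (zeta x lam) ≠ 0 →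
      HasDerivAt (phiOfx lam)
        (-((lam * Real.sin x + Real.sin (zeta x lam)) / Real.sin (zeta x lam))) x) := by
  refine ⟨?_, fun hsin ↦ ?_⟩
  · rw [cos_phiOfx hlam.le hlam1 hx, mul_div_cancel_left₀ _ (cos_pos_of_mem_Ioo hx).ne']
  · have hphi : HasDerivAt (phiOfx lam) (-1 - lam * sin x / sin (zeta x lam)) x :=
      ((hasDerivAt_id x).const_sub (π / 2)).sub (hasDerivAt_zeta hlam.le hx hsin)
    refine hphi.congr_deriv ?_
    rw [add_div, div_self hsin]
    ring
end

section
/- Consider the ODE system dλ/dτ = -(3/2)λ(β-1), dv/dτ = -(3/2)v, dθ/dτ = -(3π/8)λ for the retroreflecting rough disk. If β = 1, then λ(τ) = λ₀ is constant, v(τ) = v₀ e^{-3τ/2}, and θ(τ) = θ₀ - (3π/8)λ₀ τ; in particular, the trajectory (with arc length s proportional to τ) is a circle traversed in the sense opposite to the disk's rotation. If β > 1, then λ(τ) = λ₀ e^{-3(β-1)τ/2} → 0 and θ(τ) converges to a finite limit θ_∞ with θ(τ) - θ_∞ = (π λ₀/(4(β-1))) e^{-3(β-1)τ/2}, and λ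 = (4/π)(β-1)(θ - θ_∞). -/
/-!
The system is triangular and linear: `λ` and `v` solve `f' = c f` and are exponentials, and `θ`
is then an antiderivative of `-(3π/8) λ`. For `β > 1` that antiderivative is itself a decaying
exponential, whence the finite limit `θ_∞` and the proportionality of `λ` and `θ - θ_∞`.
-/

open Real Filter

theorem eq_add_sub_of_hasDerivAt_eq {E : Type*} [NormedAddCommGroup E] [NormedSpace ℝ E]
    {f g f' : ℝ → E} (hf : ∀ t, HasDerivAt f (f' t) t) (hg : ∀ t, HasDerivAt g (f' t) t)
    (t : ℝ) : f t = f 0 + (g t - g 0) := by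
  have hfg : ∀ t, HasDerivAt (f - g) 0 t := fun t => ((hf t).sub (hg t)).congr_deriv (sub_self _)
  have h := is_const_of_deriv_eq_zero (fun t => (hfg t).differentiableAt)
    (fun t => (hfg t).deriv) t 0
  simp only [Pi.sub_apply] at h
  rw [← sub_eq_iff_eq_add']
  exact sub_eq_sub_iff_sub_eq_sub.mp h

theorem hasDerivAt_exp_const_mul (c t : ℝ) :
    HasDerivAt (fun s => exp (c * s)) (c * exp (c * t)) t := by
  simpa [mul_comm] using ((hasDerivAt_id t).const_mul c).exp

theorem eq_mul_exp_of_hasDerivAt_const_mul {f : ℝ → ℝ} {c : ℝ}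
    (hf : ∀ t, HasDerivAt f (c * f t) t) (t : ℝ) : f t = f 0 * exp (c * t) := by
  have hconst : ∀ s, HasDerivAt (fun s => f s * exp (-c * s)) 0 s := fun s =>
    ((hf s).mul (hasDerivAt_exp_const_mul (-c) s)).congr_deriv (by ring)
  have h := eq_add_sub_of_hasDerivAt_eq hconst (fun s => hasDerivAt_const s (0 : ℝ)) t
  simp only [mul_zero, exp_zero, mul_one, sub_self, add_zero] at h
  rw [← h, mul_assoc, ← exp_add]
  simp

theorem eq_add_div_mul_exp_sub_one_of_hasDerivAt {f : ℝ → ℝ} {a c : ℝ} (hc : c ≠ 0)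
    (hf : ∀ t, HasDerivAt f (a * exp (c * t)) t) (t : ℝ) :
    f t = f 0 + a / c * (exp (c * t) - 1) := by
  have hg : ∀ s, HasDerivAt (fun s => a / c * exp (c * s)) (a * exp (c * s)) s := fun s =>
    ((hasDerivAt_exp_const_mul c s).const_mul (a / c)).congr_deriv (by field_simp)
  rw [eq_add_sub_of_hasDerivAt_eq hf hg t]
  simp only [mul_zero, exp_zero]
  ring

theorem tendsto_exp_const_mul_atTop_nhds_zero {c : ℝ} (hc : c < 0) :
    Tendsto (fun t => exp (c * t)) atTop (nhds 0) :=
  tendsto_exp_atBot.comp (tendsto_id.const_mul_atTop_of_neg hc)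

theorem stmt_18 (l v θ : ℝ → ℝ) (β lam₀ v₀ θ₀ : ℝ)
    (hl : ∀ τ, HasDerivAt l (-(3/2) * l τ * (β - 1)) τ)
    (hv : ∀ τ, HasDerivAt v (-(3/2) * v τ) τ)
    (hθ : ∀ τ, HasDerivAt θ (-(3 * π / 8) * l τ) τ)
    (hl0 : l 0 = lam₀) (hv0 : v 0 = v₀) (hθ0 : θ 0 = θ₀) :
    (β = 1 →
      ∀ τ, l τ = lam₀ ∧ v τ = v₀ * Real.exp (-(3/2) * τ) ∧
        θ τ = θ₀ - (3 * π / 8) * lam₀ * τ) ∧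
    (β > 1 →
      (∀ τ, l τ = lam₀ * Real.exp (-(3 * (β - 1) / 2) * τ)) ∧
      Tendsto l atTop (nhds 0) ∧
      ∃ θinf : ℝ, Tendsto θ atTop (nhds θinf) ∧
        (∀ τ, θ τ - θinf = (π * lam₀ / (4 * (β - 1))) * Real.exp (-(3 * (β - 1) / 2) * τ)) ∧
        (∀ τ, l τ = (4 / π) * (β - 1) * (θ τ - θinf))) := by
  have hl_eq : ∀ τ, l τ = lam₀ * exp (-(3 * (β - 1) / 2) * τ) := fun τ => by
    rw [← hl0]
    exact eq_mul_exp_of_hasDerivAt_const_mul (fun t => (hl t).congr_deriv (by ring)) τ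
  refine ⟨fun hβ τ => ?_, fun hβ => ?_⟩
  · have hl_const : ∀ τ, l τ = lam₀ := fun τ => by simp [hl_eq, hβ]
    have hlinear : ∀ t, HasDerivAt (fun s => -(3 * π / 8) * lam₀ * s) (-(3 * π / 8) * l t) t :=
      fun t => by simpa [hl_const] using (hasDerivAt_id t).const_mul (-(3 * π / 8) * lam₀)
    refine ⟨hl_const τ, hv0 ▸ eq_mul_exp_of_hasDerivAt_const_mul hv τ, ?_⟩
    rw [eq_add_sub_of_hasDerivAt_eq hθ hlinear τ, hθ0]
    ring
  · set A := π * lam₀ / (4 * (β - 1)) with hA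
    have hβ1 : β - 1 ≠ 0 := by linarith
    have hc : -(3 * (β - 1) / 2) < 0 := by linarith
    have hdecay := tendsto_exp_const_mul_atTop_nhds_zero hc
    have hθ_eq : ∀ τ, θ τ = θ₀ - A + A * exp (-(3 * (β - 1) / 2) * τ) := fun τ => by
      have hθ' : ∀ t, HasDerivAt θ (-(3 * π / 8) * lam₀ * exp (-(3 * (β - 1) / 2) * t)) t :=
        fun t => by simpa [hl_eq t, mul_assoc] using hθ t
      rw [eq_add_div_mul_exp_sub_one_of_hasDerivAt hc.ne hθ' τ, hθ0, hA]
      field_simp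
      ring
    refine ⟨hl_eq, ?_, θ₀ - A, ?_, fun τ => by rw [hθ_eq]; ring, fun τ => ?_⟩
    · rw [funext hl_eq]
      simpa using hdecay.const_mul lam₀
    · rw [funext hθ_eq]
      simpa using (hdecay.const_mul A).const_add (θ₀ - A)
    · rw [hl_eq, hθ_eq, hA]
      field_simp
      ring
end
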